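/- arXiv:1008.5143 — 3 statements merged into one kernel-verified Lean document; each statement's English description precedes it below -/
import Mathlib

section
/- Let n ∈ ℕ and 1 ≤ k ≤ n. Then f_{n,k} is a continuous, strictly increasing bijection of [0,1] onto [0,1]; moreover, if n ≥ 2 and p* ∈ [0,1] is a maximizer of ψ_{n,k} on [0,1], then p* ≥ (k-1)/(n-1) and f_{n,k}(u) = c_{n,k} · u for all u ∈ [0, p*]. -/
open MeasureTheory

/-- Binomial upper tail `B_{n,p}({k,…,n})`. -/
noncomputable def binTail (n k : ℕ) (p : ℝ) : ℝ :=
  ∑ j ∈ Finset.Icc k n, (n.choose j : ℝ) * p ^ j * (1 - p) ^ (n - j)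

/-- `ψ_{n,k}(p) = p⁻¹ B_{n,p}({k,…,n})`, extended continuously at `0`. -/
noncomputable def psi (n k : ℕ) (p : ℝ) : ℝ :=
  if p = 0 then (if k = 1 then (n : ℝ) else 0) else p⁻¹ * binTail n k p

/-- `c_{n,k} = sup_{p ∈ [0,1]} ψ_{n,k}(p)`. -/
noncomputable def cnk (n k : ℕ) : ℝ := sSup (psi n k '' Set.Icc 0 1)

/-- `f_{n,k}(u) = u ⋅ sup_{p ∈ [u,1]} ψ_{n,k}(p)`. -/
noncomputable def fnk (n k : ℕ) (u : ℝ) : ℝ := u * sSup (psi n k '' Set.Icc u 1)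

/-!
Since `k ≥ 1`, `ψ_{n,k}(p) = B(p)/p` with `B(p) = B_{n,p}({k,…,n})` is the polynomial
`∑_{j=k}^n C(n,j) p^(j-1) (1-p)^(n-j)`, so it is continuous with `ψ_{n,k}(1) = 1`, and
`B' = n b_{n-1,p}(k-1) > 0` (a telescoping sum of Bernstein derivatives), so `B` is strictly
increasing. Continuity of `f(u) = u · max_{[u,1]} ψ` is that of a maximum over a compact set
depending continuously on `u`. For strict monotonicity let `u < v` and let `p₀` maximize `ψ` on
`[u,1]`: if `p₀ ≥ v` then `f(u) ≤ u · max_{[v,1]} ψ < f(v)`, otherwise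
`f(u) ≤ p₀ ψ(p₀) = B(p₀) < B(v) ≤ f(v)`. Each summand `p^(j-1) (1-p)^(n-j)` increases on
`[0, (j-1)/(n-1)]`, the last one `p^(n-1)` strictly, so `ψ_{n,k}` is strictly increasing on
`[0, (k-1)/(n-1)]` and no maximizer lies below `(k-1)/(n-1)`.
-/

open Set

lemma sSup_image_eq_of_forall_le {α β : Type*} [ConditionallyCompleteLattice β] {g : α → β}
    {s : Set α} {p : α} (hp : p ∈ s) (hmax : ∀ q ∈ s, g q ≤ g p) : sSup (g '' s) = g p :=
  IsGreatest.csSup_eq ⟨mem_image_of_mem g hp, forall_mem_image.2 hmax⟩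

section SupOverTail

variable {g : ℝ → ℝ}

lemma continuousOn_sSup_image_Icc_left (hg : Continuous g) (a b : ℝ) :
    ContinuousOn (fun u => sSup (g '' Icc u b)) (Icc a b) := by
  have hcont : Continuous fun u => sSup ((fun t => g (max u t)) '' Icc a b) :=
    isCompact_Icc.continuous_sSup (by fun_prop)
  refine hcont.continuousOn.congr fun u hu => ?_
  have himage : (fun t => max u t) '' Icc a b = Icc u b := by
    ext x
    constructor
    · rintro ⟨t, ht, rfl⟩
      exact ⟨le_max_left _ _, max_le hu.2 ht.2⟩
    · intro hx
      exact ⟨x, ⟨hu.1.trans hx.1, hx.2⟩, max_eq_right hx.1⟩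
  rw [← himage, image_image]

lemma strictMonoOn_mul_sSup_image_Icc (hg : Continuous g)
    (hmono : StrictMonoOn (fun p => p * g p) (Icc 0 1)) :
    StrictMonoOn (fun u => u * sSup (g '' Icc u 1)) (Icc 0 1) := by
  have hle : ∀ w p, p ∈ Icc w 1 → g p ≤ sSup (g '' Icc w 1) := fun w p hp =>
    le_csSup (isCompact_Icc.bddAbove_image hg.continuousOn) (mem_image_of_mem g hp)
  have hpos : ∀ p ∈ Ioc (0 : ℝ) 1, 0 < g p := fun p hp => by
    have := hmono (left_mem_Icc.2 zero_le_one) (Ioc_subset_Icc_self hp) hp.1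
    exact pos_of_mul_pos_right (by simpa using this) hp.1.le
  intro u hu v hv huv
  obtain ⟨p₀, hp₀, hsup⟩ :=
    isCompact_Icc.exists_sSup_image_eq (nonempty_Icc.2 hu.2) hg.continuousOn
  have hv0 : 0 < v := hu.1.trans_lt huv
  simp only [hsup]
  rcases le_or_gt v p₀ with hvp | hpv
  · have hMv : 0 < sSup (g '' Icc v 1) :=
      (hpos v ⟨hv0, hv.2⟩).trans_le (hle v v ⟨le_rfl, hv.2⟩)
    calc u * g p₀ ≤ u * sSup (g '' Icc v 1) :=
          mul_le_mul_of_nonneg_left (hle v p₀ ⟨hvp, hp₀.2⟩) hu.1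
      _ < v * sSup (g '' Icc v 1) := mul_lt_mul_of_pos_right huv hMv
  · have hp₀' : p₀ ∈ Icc (0 : ℝ) 1 := ⟨hu.1.trans hp₀.1, hp₀.2⟩
    have hup : u * g p₀ ≤ p₀ * g p₀ := by
      rcases hp₀'.1.eq_or_lt with h | h
      · rw [← h, le_antisymm (h ▸ hp₀.1) hu.1]
      · exact mul_le_mul_of_nonneg_right hp₀.1 (hpos p₀ ⟨h, hp₀.2⟩).le
    calc u * g p₀ ≤ p₀ * g p₀ := hup
      _ < v * g v := hmono hp₀' hv hpv
      _ ≤ v * sSup (g '' Icc v 1) := mul_le_mul_of_nonneg_left (hle v v ⟨le_rfl, hv.2⟩) hv0.le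

end SupOverTail

lemma derivative_sum_bernsteinPolynomial (R : Type*) [CommRing R] {n κ : ℕ} (h : κ ≤ n) :
    Polynomial.derivative (∑ ν ∈ Finset.Icc κ n, bernsteinPolynomial R (n + 1) (ν + 1)) =
      (n + 1) * bernsteinPolynomial R n κ := by
  have htop : bernsteinPolynomial R n (n + 1) = 0 := by simp [bernsteinPolynomial]
  have htel := Finset.sum_Icc_sub h (bernsteinPolynomial R n)
  simp only [Polynomial.derivative_sum, bernsteinPolynomial.derivative_succ_aux,
    ← Finset.mul_sum, ← neg_sub (bernsteinPolynomial R n (_ + 1)), Finset.sum_neg_distrib, htel,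
    htop, zero_sub, neg_neg]

lemma binTail_eq_eval_sum_bernsteinPolynomial (n k : ℕ) (p : ℝ) :
    binTail n k p = (∑ j ∈ Finset.Icc k n, bernsteinPolynomial ℝ n j).eval p := by
  simp [binTail, bernsteinPolynomial, Polynomial.eval_finsetSum]

lemma strictMonoOn_binTail {n k : ℕ} (hk : 1 ≤ k) (hkn : k ≤ n) :
    StrictMonoOn (binTail n k) (Icc 0 1) := by
  obtain ⟨κ, rfl⟩ : ∃ κ, k = κ + 1 := ⟨k - 1, by omega⟩
  obtain ⟨m, rfl⟩ : ∃ m, n = m + 1 := ⟨n - 1, by omega⟩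
  set P := ∑ ν ∈ Finset.Icc κ m, bernsteinPolynomial ℝ (m + 1) (ν + 1)
  have hP : binTail (m + 1) (κ + 1) = fun p => P.eval p := by
    ext p
    rw [binTail_eq_eval_sum_bernsteinPolynomial, ← Finset.map_add_right_Icc, Finset.sum_map]
    rfl
  rw [hP]
  refine strictMonoOn_of_deriv_pos (convex_Icc 0 1) P.continuous.continuousOn fun x hx => ?_
  obtain ⟨hx0, hx1⟩ : 0 < x ∧ x < 1 := by rwa [interior_Icc] at hx
  have h1x : 0 < 1 - x := sub_pos.2 hx1
  have hchoose := Nat.choose_pos (show κ ≤ m by omega)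
  rw [Polynomial.deriv, derivative_sum_bernsteinPolynomial ℝ (by omega)]
  simp only [bernsteinPolynomial, Polynomial.eval_mul, Polynomial.eval_add, Polynomial.eval_natCast,
    Polynomial.eval_one, Polynomial.eval_pow, Polynomial.eval_X, Polynomial.eval_sub]
  positivity

noncomputable def psiPoly (n k : ℕ) (p : ℝ) : ℝ :=
  ∑ j ∈ Finset.Icc k n, (n.choose j : ℝ) * p ^ (j - 1) * (1 - p) ^ (n - j)

lemma continuous_psiPoly (n k : ℕ) : Continuous (psiPoly n k) := by
  unfold psiPoly
  fun_prop

lemma binTail_eq_mul_psiPoly {n k : ℕ} (hk : 1 ≤ k) (p : ℝ) :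
    binTail n k p = p * psiPoly n k p := by
  rw [binTail, psiPoly, Finset.mul_sum]
  refine Finset.sum_congr rfl fun j hj => ?_
  rw [← mul_pow_sub_one (by grind : j ≠ 0) p]
  ring

lemma psiPoly_zero {n k : ℕ} (hk : 1 ≤ k) : psiPoly n k 0 = if k = 1 then (n : ℝ) else 0 := by
  rw [psiPoly, Finset.sum_eq_single k]
  · split_ifs with h
    · simp [h]
    · simp [zero_pow (show k - 1 ≠ 0 by omega)]
  · intro j hj hjk
    simp [zero_pow (show j - 1 ≠ 0 by grind)]
  · intro hk'
    simp [Nat.choose_eq_zero_of_lt (show n < k by grind)]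

lemma psi_eq_psiPoly {n k : ℕ} (hk : 1 ≤ k) : psi n k = psiPoly n k := by
  ext p
  by_cases hp : p = 0
  · rw [psi, if_pos hp, hp, psiPoly_zero hk]
  · rw [psi, if_neg hp, binTail_eq_mul_psiPoly hk, inv_mul_cancel_left₀ hp]

lemma psiPoly_one {n k : ℕ} (hkn : k ≤ n) : psiPoly n k 1 = 1 := by
  rw [psiPoly, Finset.sum_eq_single_of_mem n (Finset.mem_Icc.2 ⟨hkn, le_rfl⟩)]
  · simp
  · intro j hj hjn
    simp [zero_pow (Nat.sub_ne_zero_of_lt (lt_of_le_of_ne (Finset.mem_Icc.1 hj).2 hjn))]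

lemma monotoneOn_pow_mul_one_sub_pow (a b : ℕ) :
    MonotoneOn (fun p : ℝ => p ^ a * (1 - p) ^ b) (Icc 0 (a / (a + b))) := by
  rcases Nat.eq_zero_or_pos b with rfl | hb
  · intro x hx y _ hxy
    simpa using pow_le_pow_left₀ hx.1 hxy a
  refine monotoneOn_of_deriv_nonneg (convex_Icc _ _) (by fun_prop) (by fun_prop) fun x hx => ?_
  obtain ⟨hx0, hxa⟩ : 0 < x ∧ x < a / (a + b) := by rwa [interior_Icc] at hx
  have hab : (0 : ℝ) < a + b := by positivity
  rw [lt_div_iff₀ hab] at hxa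
  have ha : 0 < a := Nat.cast_pos.1 ((by positivity : 0 < x * ((a : ℝ) + b)).trans hxa)
  obtain ⟨a, rfl⟩ := Nat.exists_eq_add_one.2 ha
  obtain ⟨b, rfl⟩ := Nat.exists_eq_add_one.2 hb
  push_cast at hxa
  have h1x : 0 < 1 - x := by nlinarith
  have hd : HasDerivAt (fun p : ℝ => p ^ (a + 1) * (1 - p) ^ (b + 1))
      (x ^ a * (1 - x) ^ b * ((a + 1) - (a + b + 2) * x)) x := by
    refine ((hasDerivAt_pow (a + 1) x).fun_mul
      (((hasDerivAt_id' x).const_sub 1).fun_pow (b + 1))).congr_deriv ?_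
    simp only [Nat.add_sub_cancel]
    push_cast
    ring
  rw [hd.deriv]
  have : 0 ≤ (a + 1 : ℝ) - (a + b + 2) * x := by linarith
  positivity

lemma strictMonoOn_psiPoly {n k : ℕ} (hk : 2 ≤ k) (hkn : k ≤ n) :
    StrictMonoOn (psiPoly n k) (Icc 0 (((k : ℝ) - 1) / ((n : ℝ) - 1))) := by
  have hn : (1 : ℝ) < n := by exact_mod_cast (by omega : 1 < n)
  intro x hx y hy hxy
  refine Finset.sum_lt_sum (fun j hj => ?_) ⟨n, Finset.mem_Icc.2 ⟨hkn, le_rfl⟩, ?_⟩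
  · obtain ⟨hkj, hjn⟩ := Finset.mem_Icc.1 hj
    have hsub : Icc 0 (((k : ℝ) - 1) / ((n : ℝ) - 1)) ⊆
        Icc 0 (((j - 1 : ℕ) : ℝ) / ((j - 1 : ℕ) + (n - j : ℕ))) := by
      have hden : ((j - 1 : ℕ) : ℝ) + (n - j : ℕ) = n - 1 := by
        rw [Nat.cast_sub (by omega), Nat.cast_sub hjn, Nat.cast_one]
        ring
      rw [hden, Nat.cast_sub (by omega), Nat.cast_one]
      exact Icc_subset_Icc_right (by gcongr)
    simp only [mul_assoc]
    exact mul_le_mul_of_nonneg_left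
      (monotoneOn_pow_mul_one_sub_pow _ _ (hsub hx) (hsub hy) hxy.le) (Nat.cast_nonneg _)
  · simpa using pow_lt_pow_left₀ hxy hx.1 (by omega : n - 1 ≠ 0)

lemma div_le_of_forall_psi_le {n k : ℕ} (hk : 1 ≤ k) (hkn : k ≤ n) {p : ℝ}
    (hp : p ∈ Icc 0 1) (hmax : ∀ q ∈ Icc (0 : ℝ) 1, psi n k q ≤ psi n k p) :
    ((k : ℝ) - 1) / ((n : ℝ) - 1) ≤ p := by
  rcases hk.eq_or_lt with rfl | hk
  · simpa using hp.1
  by_contra! hlt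
  have hn : (1 : ℝ) < n := by exact_mod_cast (by omega : 1 < n)
  have hr : ((k : ℝ) - 1) / ((n : ℝ) - 1) ∈ Icc 0 1 := by
    have hkn' : (k : ℝ) ≤ n := by exact_mod_cast hkn
    have hk' : (1 : ℝ) ≤ k := by exact_mod_cast hk.le
    exact ⟨div_nonneg (by linarith) (by linarith), (div_le_one (by linarith)).2 (by linarith)⟩
  have := strictMonoOn_psiPoly hk hkn ⟨hp.1, hlt.le⟩ ⟨hr.1, le_rfl⟩ hlt
  rw [← psi_eq_psiPoly (by omega)] at this
  exact (hmax _ hr).not_gt this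

/-- `f_{n,k}` is a continuous strictly increasing bijection of `[0,1]` onto `[0,1]`,
and for `n ≥ 2` it is linear with slope `c_{n,k}` on `[0, p*]` for any maximizer `p*` of
`ψ_{n,k}`, which moreover satisfies `p* ≥ (k-1)/(n-1)`. -/
theorem fnk_properties (n k : ℕ) (hk1 : 1 ≤ k) (hkn : k ≤ n) :
    ContinuousOn (fnk n k) (Set.Icc 0 1) ∧
    StrictMonoOn (fnk n k) (Set.Icc 0 1) ∧
    Set.BijOn (fnk n k) (Set.Icc 0 1) (Set.Icc 0 1) ∧
    (2 ≤ n → ∀ pstar ∈ Set.Icc (0:ℝ) 1,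
      (∀ p ∈ Set.Icc (0:ℝ) 1, psi n k p ≤ psi n k pstar) →
      ((k:ℝ) - 1) / ((n:ℝ) - 1) ≤ pstar ∧
      ∀ u ∈ Set.Icc (0:ℝ) pstar, fnk n k u = cnk n k * u) := by
  have hψ : psi n k = psiPoly n k := psi_eq_psiPoly hk1
  have hψc : Continuous (psi n k) := hψ ▸ continuous_psiPoly n k
  have hcont : ContinuousOn (fnk n k) (Icc 0 1) :=
    continuousOn_id.mul (continuousOn_sSup_image_Icc_left hψc 0 1)
  have hmono : StrictMonoOn (fnk n k) (Icc 0 1) := by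
    refine strictMonoOn_mul_sSup_image_Icc hψc ?_
    simpa only [hψ, ← binTail_eq_mul_psiPoly hk1] using strictMonoOn_binTail hk1 hkn
  have hbij : BijOn (fnk n k) (Icc 0 1) (Icc (fnk n k 0) (fnk n k 1)) :=
    ⟨hmono.monotoneOn.mapsTo_Icc, hmono.injOn,
      hcont.surjOn_Icc (left_mem_Icc.2 zero_le_one) (right_mem_Icc.2 zero_le_one)⟩
  have hf0 : fnk n k 0 = 0 := zero_mul _
  have hf1 : fnk n k 1 = 1 := by simp [fnk, hψ, psiPoly_one hkn]
  refine ⟨hcont, hmono, by rwa [hf0, hf1] at hbij, fun _ pstar hpstar hmax =>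
    ⟨div_le_of_forall_psi_le hk1 hkn hpstar hmax, fun u hu => ?_⟩⟩
  have hmax' : ∀ p ∈ Icc u 1, psi n k p ≤ psi n k pstar := fun p hp =>
    hmax p ⟨hu.1.trans hp.1, hp.2⟩
  rw [fnk, cnk, sSup_image_eq_of_forall_le hpstar hmax,
    sSup_image_eq_of_forall_le (show pstar ∈ Icc u 1 from ⟨hu.2, hpstar.2⟩) hmax', mul_comm]
end

section
/- Let n ∈ ℕ and 1 ≤ k ≤ n. Then for every u ∈ [0,1]: (min(1, nu/k))/(1 + 5 k^{-1/3}) ≤ f_{n,k}(u) ≤ min(1, c_{n,k} u) ≤ min(1, nu/k). -/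
open MeasureTheory

/-!
Markov's inequality `k B_{n,p}({k,…,n}) ≤ n p` gives `ψ_{n,k} ≤ n / k`, and `B ≤ 1` gives
`ψ_{n,k}(p) ≤ 1 / u` for `p ≥ u`; these are the upper bounds. For the lower bound put
`e = k^{-1/3}` and `w = k (1 + 2e)`. Chebyshev's inequality with the binomial variance
`n p (1 - p)` gives `B_{n,p}({k,…,n}) ≥ 1 - w / (2 e k + 1)² ≥ (1 + 2e) / (1 + 5e)` whenever
`n p ≥ w`. Evaluating `ψ_{n,k}` at `p = 1` if `n ≤ w`, at `p = w / n` if `u ≤ w / n`, and at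
`p = u` otherwise, gives `f_{n,k}(u) ≥ min(1, n u / k) / (1 + 5e)`.
-/

open Finset Polynomial

section BinomialMoments

variable (n : ℕ) (p : ℝ)

lemma eval_bernsteinPolynomial (j : ℕ) :
    (bernsteinPolynomial ℝ n j).eval p = n.choose j * p ^ j * (1 - p) ^ (n - j) := by
  simp [bernsteinPolynomial]

lemma sum_eval_bernsteinPolynomial :
    ∑ j ∈ range (n + 1), (bernsteinPolynomial ℝ n j).eval p = 1 := by
  rw [← eval_finsetSum, bernsteinPolynomial.sum, eval_one]

lemma sum_mul_eval_bernsteinPolynomial :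
    ∑ j ∈ range (n + 1), (j : ℝ) * (bernsteinPolynomial ℝ n j).eval p = n * p := by
  simpa [eval_finsetSum, nsmul_eq_mul] using
    congrArg (eval p) (bernsteinPolynomial.sum_smul (R := ℝ) n)

lemma sum_sq_mul_eval_bernsteinPolynomial :
    ∑ j ∈ range (n + 1), (n * p - j) ^ 2 * (bernsteinPolynomial ℝ n j).eval p
      = n * p * (1 - p) := by
  simpa [eval_finsetSum, nsmul_eq_mul] using
    congrArg (eval p) (bernsteinPolynomial.variance (R := ℝ) n)

lemma binTail_eq_sum_bernsteinPolynomial (k : ℕ) :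
    binTail n k p = ∑ j ∈ Icc k n, (bernsteinPolynomial ℝ n j).eval p := by
  simp only [binTail, eval_bernsteinPolynomial]

end BinomialMoments

lemma eval_bernsteinPolynomial_nonneg (n j : ℕ) {p : ℝ} (hp : p ∈ Set.Icc (0 : ℝ) 1) :
    0 ≤ (bernsteinPolynomial ℝ n j).eval p := by
  obtain ⟨hp0, hp1⟩ := hp
  have : 0 ≤ 1 - p := sub_nonneg.2 hp1
  rw [eval_bernsteinPolynomial]
  positivity

lemma antitoneOn_div_sub_sq {a : ℝ} (ha : 0 ≤ a) :
    AntitoneOn (fun x : ℝ => x / (x - a) ^ 2) (Set.Ioi a) := by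
  intro w (hw : a < w) x (hx : a < x) hwx
  have hxw : 0 ≤ (x - w) * (x * w - a ^ 2) := mul_nonneg (by linarith) (by nlinarith)
  rw [div_le_div_iff₀ (by nlinarith) (by nlinarith)]
  nlinarith

section BinTail

variable {n k : ℕ} {p : ℝ}

lemma binTail_le_one (hp : p ∈ Set.Icc (0 : ℝ) 1) : binTail n k p ≤ 1 := by
  rw [binTail_eq_sum_bernsteinPolynomial, ← sum_eval_bernsteinPolynomial n p]
  refine sum_le_sum_of_subset_of_nonneg (fun j hj => ?_) fun j _ _ =>
    eval_bernsteinPolynomial_nonneg n j hp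
  simp only [mem_Icc, mem_range] at hj ⊢
  omega

lemma binTail_one (hkn : k ≤ n) : binTail n k 1 = 1 := by
  simp [binTail_eq_sum_bernsteinPolynomial, bernsteinPolynomial.eval_at_1, hkn]

lemma sum_range_add_binTail (hkn : k ≤ n) :
    ∑ j ∈ range k, (bernsteinPolynomial ℝ n j).eval p + binTail n k p = 1 := by
  rw [binTail_eq_sum_bernsteinPolynomial, ← sum_eval_bernsteinPolynomial n p, range_eq_Ico,
    range_eq_Ico, ← Ico_add_one_right_eq_Icc]
  exact sum_Ico_consecutive _ k.zero_le (by omega)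

lemma natCast_mul_binTail_le (hp : p ∈ Set.Icc (0 : ℝ) 1) : k * binTail n k p ≤ n * p := by
  rw [binTail_eq_sum_bernsteinPolynomial, mul_sum, ← sum_mul_eval_bernsteinPolynomial]
  calc ∑ j ∈ Icc k n, (k : ℝ) * (bernsteinPolynomial ℝ n j).eval p
      ≤ ∑ j ∈ Icc k n, (j : ℝ) * (bernsteinPolynomial ℝ n j).eval p := by
        refine sum_le_sum fun j hj => ?_
        gcongr
        · exact eval_bernsteinPolynomial_nonneg n j hp
        · exact (mem_Icc.1 hj).1
    _ ≤ ∑ j ∈ range (n + 1), (j : ℝ) * (bernsteinPolynomial ℝ n j).eval p := by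
        refine sum_le_sum_of_subset_of_nonneg (fun j hj => ?_) fun j _ _ =>
          mul_nonneg j.cast_nonneg (eval_bernsteinPolynomial_nonneg n j hp)
        simp only [mem_Icc, mem_range] at hj ⊢
        omega

lemma sq_mul_sum_range_eval_bernsteinPolynomial_le (hkn : k ≤ n) (hp : p ∈ Set.Icc (0 : ℝ) 1)
    (hk : k ≤ n * p + 1) :
    (n * p + 1 - k) ^ 2 * ∑ j ∈ range k, (bernsteinPolynomial ℝ n j).eval p
      ≤ n * p * (1 - p) := by
  rw [mul_sum, ← sum_sq_mul_eval_bernsteinPolynomial]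
  calc ∑ j ∈ range k, (n * p + 1 - k) ^ 2 * (bernsteinPolynomial ℝ n j).eval p
      ≤ ∑ j ∈ range k, (n * p - j) ^ 2 * (bernsteinPolynomial ℝ n j).eval p := by
        refine sum_le_sum fun j hj => ?_
        have hjk : (j : ℝ) + 1 ≤ k := by exact_mod_cast mem_range.1 hj
        exact mul_le_mul_of_nonneg_right (pow_le_pow_left₀ (by linarith) (by linarith) 2)
          (eval_bernsteinPolynomial_nonneg n j hp)
    _ ≤ ∑ j ∈ range (n + 1), (n * p - j) ^ 2 * (bernsteinPolynomial ℝ n j).eval p := by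
        refine sum_le_sum_of_subset_of_nonneg (fun j hj => ?_) fun j _ _ =>
          mul_nonneg (sq_nonneg _) (eval_bernsteinPolynomial_nonneg n j hp)
        simp only [mem_range] at hj ⊢
        omega

lemma one_sub_div_le_binTail (hk : 1 ≤ k) (hkn : k ≤ n) (hp : p ∈ Set.Icc (0 : ℝ) 1) {w : ℝ}
    (hkw : k ≤ w) (hwp : w ≤ n * p) : 1 - w / (w + 1 - k) ^ 2 ≤ binTail n k p := by
  have hpos : 0 < n * p + 1 - k := by linarith
  have hlow :
      ∑ j ∈ range k, (bernsteinPolynomial ℝ n j).eval p ≤ n * p / (n * p + 1 - k) ^ 2 :=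
    calc _ ≤ n * p * (1 - p) / (n * p + 1 - k) ^ 2 := by
          rw [le_div_iff₀ (by positivity), mul_comm]
          exact sq_mul_sum_range_eval_bernsteinPolynomial_le hkn hp (by linarith)
      _ ≤ n * p / (n * p + 1 - k) ^ 2 :=
          div_le_div_of_nonneg_right
            (mul_le_of_le_one_right (mul_nonneg n.cast_nonneg hp.1) (by linarith [hp.1]))
            (sq_nonneg _)
  have hanti : n * p / (n * p + 1 - k) ^ 2 ≤ w / (w + 1 - k) ^ 2 := by
    have hk1 : (0 : ℝ) ≤ k - 1 := by
      rw [sub_nonneg]; exact_mod_cast hk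
    simpa only [sub_add_eq_add_sub, sub_sub_eq_add_sub, add_sub_assoc] using
      antitoneOn_div_sub_sq hk1 (show k - 1 < w by linarith) (show k - 1 < n * p by linarith) hwp
  linarith [sum_range_add_binTail (p := p) hkn]

end BinTail

section Psi

variable {n k : ℕ} {p u : ℝ}

lemma psi_of_ne_zero (hp : p ≠ 0) : psi n k p = binTail n k p / p := by
  rw [psi, if_neg hp, inv_mul_eq_div]

lemma psi_le_div (hk : 1 ≤ k) (hp : p ∈ Set.Icc (0 : ℝ) 1) : psi n k p ≤ n / k := by
  have hk0 : (0 : ℝ) < k := by exact_mod_cast hk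
  rcases hp.1.eq_or_lt with rfl | hp0
  · by_cases hk1 : k = 1
    · simp [psi, hk1]
    · simp only [psi, if_true, if_neg hk1]
      positivity
  · rw [psi_of_ne_zero hp0.ne', div_le_div_iff₀ hp0 hk0]
    linarith [natCast_mul_binTail_le (n := n) (k := k) hp]

lemma psi_le_inv (hu : 0 < u) (hp : p ∈ Set.Icc u 1) : psi n k p ≤ u⁻¹ := by
  have hp0 : 0 < p := hu.trans_le hp.1
  rw [psi_of_ne_zero hp0.ne', ← one_div]
  calc binTail n k p / p ≤ 1 / p := by
        gcongr
        exact binTail_le_one ⟨hp0.le, hp.2⟩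
    _ ≤ 1 / u := one_div_le_one_div_of_le hu hp.1

lemma cnk_le_div (hk : 1 ≤ k) : cnk n k ≤ n / k :=
  csSup_le ⟨_, Set.mem_image_of_mem _ (Set.left_mem_Icc.2 zero_le_one)⟩ <| by
    rintro _ ⟨p, hp, rfl⟩
    exact psi_le_div hk hp

lemma fnk_le_cnk_mul (hk : 1 ≤ k) (hu : u ∈ Set.Icc (0 : ℝ) 1) :
    fnk n k u ≤ cnk n k * u := by
  have hbdd : BddAbove (psi n k '' Set.Icc 0 1) :=
    ⟨n / k, by rintro _ ⟨p, hp, rfl⟩; exact psi_le_div hk hp⟩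
  rw [fnk, cnk, mul_comm]
  exact mul_le_mul_of_nonneg_right (csSup_le_csSup hbdd
    ⟨_, Set.mem_image_of_mem _ (Set.right_mem_Icc.2 hu.2)⟩
    (Set.image_mono (Set.Icc_subset_Icc_left hu.1))) hu.1

lemma fnk_le_one (hu : u ∈ Set.Icc (0 : ℝ) 1) : fnk n k u ≤ 1 := by
  rcases hu.1.eq_or_lt with rfl | hu0
  · simp [fnk]
  have hsup : sSup (psi n k '' Set.Icc u 1) ≤ u⁻¹ :=
    csSup_le ⟨_, Set.mem_image_of_mem _ (Set.right_mem_Icc.2 hu.2)⟩ <| by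
      rintro _ ⟨p, hp, rfl⟩
      exact psi_le_inv hu0 hp
  calc fnk n k u ≤ u * u⁻¹ := mul_le_mul_of_nonneg_left hsup hu.1
    _ = 1 := mul_inv_cancel₀ hu0.ne'

lemma mul_psi_le_fnk (hu : 0 ≤ u) (hp : p ∈ Set.Icc u 1) : u * psi n k p ≤ fnk n k u := by
  rcases hu.eq_or_lt with rfl | hu0
  · simp [fnk]
  have hbdd : BddAbove (psi n k '' Set.Icc u 1) :=
    ⟨u⁻¹, by rintro _ ⟨q, hq, rfl⟩; exact psi_le_inv hu0 hq⟩
  exact mul_le_mul_of_nonneg_left (le_csSup hbdd (Set.mem_image_of_mem _ hp)) hu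

end Psi

section LowerBound

variable {n k : ℕ} {e p u : ℝ}

-- Cleared of denominators and using `e ^ 3 * c ^ 2 = c`, this is `7 e c ≤ 11 c + 2 e² c + 3 e`.
lemma one_add_two_mul_div_le {c : ℝ} (hc : 1 ≤ c) (he : 0 < e) (hec : e ^ 3 * c = 1) :
    (1 + 2 * e) / (1 + 5 * e) ≤ 1 - c * (1 + 2 * e) / (2 * e * c + 1) ^ 2 := by
  have he1 : e ≤ 1 := by
    by_contra! h
    nlinarith [one_lt_pow₀ h (n := 3) (by norm_num)]
  have hc2 : e ^ 3 * c ^ 2 = c := by linear_combination c * hec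
  rw [div_le_iff₀ (by positivity), sub_mul, div_mul_eq_mul_div, le_sub_iff_add_le,
    ← le_sub_iff_add_le', div_le_iff₀ (by positivity)]
  nlinarith [mul_pos he (zero_lt_one.trans_le hc)]

lemma one_add_two_mul_div_le_binTail (hk : 1 ≤ k) (hkn : k ≤ n) (hp : p ∈ Set.Icc (0 : ℝ) 1)
    (he : 0 < e) (hek : e ^ 3 * k = 1) (hnp : k * (1 + 2 * e) ≤ n * p) :
    (1 + 2 * e) / (1 + 5 * e) ≤ binTail n k p := by
  have hk1 : (1 : ℝ) ≤ k := by exact_mod_cast hk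
  have hw := one_sub_div_le_binTail hk hkn hp (w := k * (1 + 2 * e)) (by nlinarith) hnp
  rw [show (k : ℝ) * (1 + 2 * e) + 1 - k = 2 * e * k + 1 by ring] at hw
  exact (one_add_two_mul_div_le hk1 he hek).trans hw

lemma min_div_le_fnk (hk : 1 ≤ k) (hkn : k ≤ n) (he : 0 < e) (hek : e ^ 3 * k = 1)
    (hu : u ∈ Set.Icc (0 : ℝ) 1) : min 1 (n * u / k) / (1 + 5 * e) ≤ fnk n k u := by
  have hk0 : (0 : ℝ) < k := by exact_mod_cast hk
  have hden : 0 < 1 + 5 * e := by positivity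
  set w : ℝ := k * (1 + 2 * e) with hw
  have hw0 : 0 < w := by positivity
  rcases le_or_gt (n : ℝ) w with hnw | hwn
  · calc min 1 (n * u / k) / (1 + 5 * e) ≤ n * u / k / (1 + 5 * e) := by
          gcongr; exact min_le_right _ _
      _ ≤ u := by
          rw [div_div, div_le_iff₀ (by positivity)]
          nlinarith [mul_le_mul_of_nonneg_right hnw hu.1,
            mul_nonneg (mul_nonneg hk0.le he.le) hu.1]
      _ = u * psi n k 1 := by rw [psi_of_ne_zero one_ne_zero, binTail_one hkn, div_one, mul_one]
      _ ≤ fnk n k u := mul_psi_le_fnk hu.1 ⟨hu.2, le_rfl⟩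
  have hn0 : (0 : ℝ) < n := hw0.trans hwn
  rcases le_or_gt u (w / n) with huw | hwu
  · have hp : w / n ∈ Set.Icc (0 : ℝ) 1 := ⟨by positivity, (div_le_one hn0).2 hwn.le⟩
    have hB := one_add_two_mul_div_le_binTail hk hkn hp he hek (by rw [mul_div_cancel₀ _ hn0.ne'])
    calc min 1 (n * u / k) / (1 + 5 * e) ≤ n * u / k / (1 + 5 * e) := by
          gcongr; exact min_le_right _ _
      _ = n * u / w * ((1 + 2 * e) / (1 + 5 * e)) := by rw [hw]; field_simp
      _ ≤ n * u / w * binTail n k (w / n) := by have := hu.1; gcongr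
      _ = u * psi n k (w / n) := by rw [psi_of_ne_zero (div_pos hw0 hn0).ne']; field_simp
      _ ≤ fnk n k u := mul_psi_le_fnk hu.1 ⟨huw, hp.2⟩
  · have hu0 : 0 < u := (div_pos hw0 hn0).trans hwu
    have hB := one_add_two_mul_div_le_binTail hk hkn hu he hek
      (by rw [div_lt_iff₀ hn0] at hwu; linarith)
    calc min 1 (n * u / k) / (1 + 5 * e) ≤ 1 / (1 + 5 * e) := by gcongr; exact min_le_left _ _
      _ ≤ (1 + 2 * e) / (1 + 5 * e) := by gcongr; linarith
      _ ≤ binTail n k u := hB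
      _ = u * psi n k u := by rw [psi_of_ne_zero hu0.ne']; field_simp
      _ ≤ fnk n k u := mul_psi_le_fnk hu.1 ⟨le_rfl, hu.2⟩

end LowerBound

lemma rpow_neg_one_third_pow_three_mul {x : ℝ} (hx : 0 < x) :
    (x ^ (-(1 / 3) : ℝ)) ^ 3 * x = 1 := by
  rw [← Real.rpow_natCast, ← Real.rpow_mul hx.le]
  norm_num [Real.rpow_neg_one, hx.ne']

/-- Bounds for `f_{n,k}`:
`min(1, nu/k)/(1 + 5 k^{-1/3}) ≤ f_{n,k}(u) ≤ min(1, c_{n,k} u) ≤ min(1, nu/k)`. -/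
theorem fnk_bounds (n k : ℕ) (hk1 : 1 ≤ k) (hkn : k ≤ n) :
    ∀ u ∈ Set.Icc (0:ℝ) 1,
      min 1 ((n : ℝ) * u / k) / (1 + 5 * (k : ℝ) ^ (-(1/3) : ℝ)) ≤ fnk n k u ∧
      fnk n k u ≤ min 1 (cnk n k * u) ∧
      min 1 (cnk n k * u) ≤ min 1 ((n : ℝ) * u / k) := by
  intro u hu
  have hk0 : (0 : ℝ) < k := by exact_mod_cast hk1
  refine ⟨min_div_le_fnk hk1 hkn (Real.rpow_pos_of_pos hk0 _)
    (rpow_neg_one_third_pow_three_mul hk0) hu, le_min (fnk_le_one hu) (fnk_le_cnk_mul hk1 hu),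
    min_le_min_left _ ?_⟩
  calc cnk n k * u ≤ n / k * u := mul_le_mul_of_nonneg_right (cnk_le_div hk1) hu.1
    _ = n * u / k := div_mul_eq_mul_div _ _ _
end

section
/- Let α, c ∈ [0,1] and let φ : [0,1] → ℝ be continuous, monotone increasing, convex on [0,c] and concave on [c,1]. Then there exists t ∈ [max(α,c), 1] such that the probability measure P_t := (1 - α/t) δ_0 + (α/t) δ_t (where α/t := 0 in case t = 0, which can occur only if α = 0) satisfies ∫ φ dP_t ≥ ∫ φ dQ for every Borel probability measure Q on [0,1] with mean ∫ s dQ(s) ≤ α. In particular, the supremum of ∫ φ dQ over all Borel probability measures Q on [0,1] with mean at most α is attained by a measure of the form (1 - α/t) δ_0 + (α/t) δ_t with t ∈ [max(α,c), 1]. -/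
/-!
An affine function `v + b (s - α)` with `b ≥ 0` that dominates `φ` on `[0,1]` bounds `∫ φ dQ`
by `v` for every admissible `Q`, so it suffices to find such a line whose value `v` at `α` is
`(1 - α/t) φ(0) + (α/t) φ(t)`. Let `t` maximise the slope `(φ(s) - φ(0))/s` from the origin over
`[max(α,c), 1]`. If no point of `(0,1]` has a larger slope, the chord through `(0, φ 0)` and
`(t, φ t)` is such a line. Otherwise, since this slope increases on the convex part, some
`s₁ ∈ [c, α)` has a larger slope than `α`. Take `t = α` and a supporting line of the concave part
at `α`: its slope is at most that of the chord from `s₁` to `α`, which is below the slope from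
the origin to `α`, so it passes above `(0, φ 0)` and, by convexity, above `φ` on `[0, c]`.
For `α = 0` the mean constraint forces `Q = δ₀`.
-/

open MeasureTheory Set

noncomputable def twoPoint (α t : ℝ) : Measure ℝ :=
  ENNReal.ofReal (1 - α / t) • Measure.dirac 0 + ENNReal.ofReal (α / t) • Measure.dirac t

lemma integral_smul_dirac_add_smul_dirac {X : Type*} [MeasurableSpace X]
    [MeasurableSingletonClass X] (f : X → ℝ) {p q : ℝ} (hp : 0 ≤ p) (hq : 0 ≤ q) (x y : X) :
    ∫ z, f z ∂(ENNReal.ofReal p • Measure.dirac x + ENNReal.ofReal q • Measure.dirac y)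
      = p * f x + q * f y := by
  rw [integral_add_measure ((integrable_dirac (by simp)).smul_measure ENNReal.ofReal_ne_top)
      ((integrable_dirac (by simp)).smul_measure ENNReal.ofReal_ne_top),
    integral_smul_measure, integral_smul_measure, integral_dirac, integral_dirac,
    ENNReal.toReal_ofReal hp, ENNReal.toReal_ofReal hq, smul_eq_mul, smul_eq_mul]

lemma integral_twoPoint (φ : ℝ → ℝ) {α t : ℝ} (hα : 0 ≤ α) (hαt : α ≤ t) :
    ∫ s, φ s ∂twoPoint α t = (1 - α / t) * φ 0 + α / t * φ t := by
  have hle : α / t ≤ 1 := div_le_one_of_le₀ hαt (hα.trans hαt)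
  exact integral_smul_dirac_add_smul_dirac φ (sub_nonneg.2 hle) (div_nonneg hα (hα.trans hαt)) 0 t

lemma integrable_of_ae_mem_of_continuousOn {X : Type*} [TopologicalSpace X] [T2Space X]
    [MeasurableSpace X] [OpensMeasurableSpace X] {μ : Measure X} [IsFiniteMeasure μ]
    {K : Set X} (hK : IsCompact K) (hμK : ∀ᵐ x ∂μ, x ∈ K) {f : X → ℝ} (hf : ContinuousOn f K) :
    Integrable f μ := by
  have hfK : IntegrableOn f K μ := hf.integrableOn_compact hK
  rwa [IntegrableOn, Measure.restrict_eq_self_of_ae_mem hμK] at hfK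

section ProbabilityOnCompact

variable {K : Set ℝ} {Q : Measure ℝ} [IsProbabilityMeasure Q]

lemma integral_le_of_le_affine (hK : IsCompact K) (hQK : ∀ᵐ s ∂Q, s ∈ K) {φ : ℝ → ℝ}
    (hφ : ContinuousOn φ K) {α v b : ℝ} (hb : 0 ≤ b) (hφle : ∀ s ∈ K, φ s ≤ v + b * (s - α))
    (hmean : ∫ s, s ∂Q ≤ α) : ∫ s, φ s ∂Q ≤ v := by
  have hid : Integrable (fun s : ℝ ↦ s) Q :=
    integrable_of_ae_mem_of_continuousOn hK hQK continuousOn_id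
  have hlin : Integrable (fun s ↦ b * (s - α)) Q := (hid.sub (integrable_const α)).const_mul b
  calc ∫ s, φ s ∂Q ≤ ∫ s, v + b * (s - α) ∂Q :=
        integral_mono_ae (integrable_of_ae_mem_of_continuousOn hK hQK hφ)
          ((integrable_const v).add hlin) (hQK.mono hφle)
    _ = v + b * (∫ s, s ∂Q - α) := by
        rw [integral_add (integrable_const v) hlin,
          integral_const_mul, integral_sub hid (integrable_const α)]
        simp
    _ ≤ v := by nlinarith

lemma integral_eq_of_integral_id_nonpos (hK : IsCompact K) (hK0 : K ⊆ Ici 0)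
    (hQK : ∀ᵐ s ∂Q, s ∈ K) (hmean : ∫ s, s ∂Q ≤ 0) (φ : ℝ → ℝ) : ∫ s, φ s ∂Q = φ 0 := by
  have hnn : 0 ≤ᵐ[Q] fun s ↦ s := hQK.mono fun s hs ↦ hK0 hs
  have hzero : (fun s ↦ s) =ᵐ[Q] 0 :=
    (integral_eq_zero_iff_of_nonneg_ae hnn
      (integrable_of_ae_mem_of_continuousOn hK hQK continuousOn_id)).1
      (hmean.antisymm (integral_nonneg_of_ae hnn))
  rw [integral_congr_ae (g := fun _ ↦ φ 0) (hzero.mono fun s hs ↦ congrArg φ hs)]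
  simp

end ProbabilityOnCompact

lemma ConvexOn.le_on_segment_of_concaveOn {E : Type*} [AddCommGroup E] [Module ℝ E] {S : Set E}
    {f g : E → ℝ} (hf : ConvexOn ℝ S f) (hg : ConcaveOn ℝ S g) {x y z : E} (hx : x ∈ S)
    (hy : y ∈ S) (hfgx : f x ≤ g x) (hfgy : f y ≤ g y) (hz : z ∈ segment ℝ x y) : f z ≤ g z := by
  have := (hf.sub hg).le_on_segment hx hy hz
  simp only [Pi.sub_apply] at this
  linarith [max_le (sub_nonpos.2 hfgx) (sub_nonpos.2 hfgy)]

lemma ConcaveOn.exists_le_add_mul_sub {S : Set ℝ} {f : ℝ → ℝ} (hf : ConcaveOn ℝ S f) {x : ℝ}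
    (hx : x ∈ interior S) : ∃ g, ∀ y ∈ S, f y ≤ f x + g * (y - x) := by
  set d := derivWithin (-f) (Ioi x) x
  refine ⟨-d, fun y hy ↦ ?_⟩
  rcases lt_trichotomy y x with hyx | rfl | hxy
  · have h := (hf.neg.slope_le_leftDeriv_of_mem_interior hy hx hyx).trans
      (hf.neg.leftDeriv_le_rightDeriv_of_mem_interior hx)
    rw [slope_def_field, div_le_iff₀ (sub_pos.2 hyx)] at h
    simp only [Pi.neg_apply] at h
    linarith
  · simp
  · have h := hf.neg.rightDeriv_le_slope_of_mem_interior hx hy hxy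
    rw [slope_def_field, le_div_iff₀ (sub_pos.2 hxy)] at h
    simp only [Pi.neg_apply] at h
    linarith

lemma concaveOn_affine (S : Set ℝ) (hS : Convex ℝ S) (v g a : ℝ) :
    ConcaveOn ℝ S fun s ↦ v + g * (s - a) := by
  refine ⟨hS, fun x _ y _ p q _ _ hpq ↦ le_of_eq ?_⟩
  simp only [smul_eq_mul]
  linear_combination (v - g * a) * hpq

section ConvexConcave

variable {φ : ℝ → ℝ} {c : ℝ}

lemma le_add_mul_of_slope_le {b : ℝ} (hb : ∀ s ∈ Ioc (0 : ℝ) 1, slope φ 0 s ≤ b) :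
    ∀ s ∈ Icc (0 : ℝ) 1, φ s ≤ φ 0 + b * s := by
  intro s hs
  rcases hs.1.eq_or_lt with rfl | hs0
  · simp
  · have h := hb s ⟨hs0, hs.2⟩
    rw [slope_def_field, sub_zero, div_le_iff₀ hs0] at h
    linarith

lemma exists_slope_lt_of_isMaxOn (hconv : ConvexOn ℝ (Icc 0 c) φ) (hc1 : c ≤ 1) {α t s₀ : ℝ}
    (htmax : IsMaxOn (slope φ 0) (Icc (max α c) 1) t) (hs₀ : s₀ ∈ Ioc 0 1)
    (hlt : slope φ 0 t < slope φ 0 s₀) :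
    ∃ s₁, c ≤ s₁ ∧ 0 < s₁ ∧ s₁ < α ∧ slope φ 0 t < slope φ 0 s₁ := by
  have hs₀c : slope φ 0 s₀ ≤ slope φ 0 (max s₀ c) := by
    rcases le_total s₀ c with h | h
    · rw [max_eq_right h]
      exact hconv.slope_mono ⟨le_rfl, hs₀.1.le.trans h⟩ ⟨⟨hs₀.1.le, h⟩, hs₀.1.ne'⟩
        ⟨⟨hs₀.1.le.trans h, le_rfl⟩, (hs₀.1.trans_le h).ne'⟩ h
    · rw [max_eq_left h]
  have hm : max s₀ c < max α c := by
    by_contra! h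
    exact (htmax ⟨h, max_le hs₀.2 hc1⟩).not_gt (hlt.trans_le hs₀c)
  exact ⟨max s₀ c, le_max_right _ _, hs₀.1.trans_le (le_max_left _ _),
    (lt_max_iff.1 hm).resolve_right (le_max_right _ _).not_gt, hlt.trans_le hs₀c⟩

lemma exists_supporting_line_of_slope_lt (hmono : MonotoneOn φ (Icc 0 1))
    (hconv : ConvexOn ℝ (Icc 0 c) φ) (hconc : ConcaveOn ℝ (Icc c 1) φ) {α s₁ : ℝ}
    (hcs₁ : c ≤ s₁) (hs₁ : 0 < s₁) (hs₁α : s₁ < α) (hα1 : α < 1)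
    (hslope : slope φ 0 α < slope φ 0 s₁) :
    ∃ b, 0 ≤ b ∧ ∀ s ∈ Icc (0 : ℝ) 1, φ s ≤ φ α + b * (s - α) := by
  have hα0 : 0 < α := hs₁.trans hs₁α
  obtain ⟨g, hg⟩ := hconc.exists_le_add_mul_sub (x := α) (by
    rw [interior_Icc]; exact ⟨hcs₁.trans_lt hs₁α, hα1⟩)
  have hg0 : 0 ≤ g := by
    by_contra! hneg
    have h1 := hg 1 ⟨(hcs₁.trans_lt hs₁α).le.trans hα1.le, le_rfl⟩
    have h2 := hmono ⟨hα0.le, hα1.le⟩ ⟨zero_le_one, le_rfl⟩ hα1.le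
    nlinarith
  have hgα : g * α ≤ φ α - φ 0 := by
    have h1 := hg s₁ ⟨hcs₁, hs₁α.le.trans hα1.le⟩
    rw [slope_def_field, slope_def_field, sub_zero, sub_zero, div_lt_div_iff₀ hα0 hs₁] at hslope
    nlinarith
  refine ⟨g, hg0, fun s hs ↦ ?_⟩
  rcases le_or_gt c s with hcs | hsc
  · exact hg s ⟨hcs, hs.2⟩
  · have hc0 : 0 ≤ c := hs.1.trans hsc.le
    refine hconv.le_on_segment_of_concaveOn (concaveOn_affine _ (convex_Icc 0 c) _ _ _)
      ⟨le_rfl, hc0⟩ ⟨hc0, le_rfl⟩ (by linarith) (hg c ⟨le_rfl, ?_⟩) ?_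
    · exact hcs₁.trans (hs₁α.le.trans hα1.le)
    · rw [segment_eq_Icc hc0]; exact ⟨hs.1, hsc.le⟩

lemma exists_two_point_supporting_line (hcont : ContinuousOn φ (Icc 0 1))
    (hmono : MonotoneOn φ (Icc 0 1)) (hconv : ConvexOn ℝ (Icc 0 c) φ)
    (hconc : ConcaveOn ℝ (Icc c 1) φ) (hc1 : c ≤ 1) {α : ℝ} (hα0 : 0 < α) (hα1 : α ≤ 1) :
    ∃ t ∈ Icc (max α c) 1, ∃ b, 0 ≤ b ∧
      ∀ s ∈ Icc (0 : ℝ) 1, φ s ≤ (1 - α / t) * φ 0 + α / t * φ t + b * (s - α) := by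
  have hm1 : max α c ≤ 1 := max_le hα1 hc1
  rcases hα1.eq_or_lt with rfl | hα1
  · exact ⟨1, ⟨hm1, le_rfl⟩, 0, le_rfl, fun s hs ↦ by
      simpa using hmono hs ⟨zero_le_one, le_rfl⟩ hs.2⟩
  have hpos : ∀ s ∈ Icc (max α c) 1, 0 < s := fun s hs ↦
    hα0.trans_le ((le_max_left α c).trans hs.1)
  have hsub : Icc (max α c) 1 ⊆ Icc 0 1 := fun s hs ↦ ⟨(hpos s hs).le, hs.2⟩
  obtain ⟨t, ht, htmax⟩ := isCompact_Icc.exists_isMaxOn (nonempty_Icc.2 hm1)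
    (show ContinuousOn (slope φ 0) (Icc (max α c) 1) by
      rw [slope_fun_def_field]
      exact ((hcont.mono hsub).sub continuousOn_const).div
        (continuousOn_id.sub continuousOn_const) fun s hs ↦ sub_ne_zero.2 (hpos s hs).ne')
  by_cases hchord : ∀ s ∈ Ioc (0 : ℝ) 1, slope φ 0 s ≤ slope φ 0 t
  · refine ⟨t, ht, slope φ 0 t, ?_, fun s hs ↦ ?_⟩
    · rw [slope_def_field, sub_zero]
      exact div_nonneg (sub_nonneg.2 (hmono ⟨le_rfl, zero_le_one⟩ (hsub ht) (hpos t ht).le))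
        (hpos t ht).le
    · have hval : (1 - α / t) * φ 0 + α / t * φ t + slope φ 0 t * (s - α)
          = φ 0 + slope φ 0 t * s := by
        rw [slope_def_field, sub_zero]
        field_simp [(hpos t ht).ne']
        ring
      exact hval ▸ le_add_mul_of_slope_le hchord s hs
  · push Not at hchord
    obtain ⟨s₀, hs₀, hlt⟩ := hchord
    obtain ⟨s₁, hcs₁, hs₁, hs₁α, hts₁⟩ := exists_slope_lt_of_isMaxOn hconv hc1 htmax hs₀ hlt
    have hmα : max α c = α := max_eq_left (hcs₁.trans hs₁α.le)
    obtain ⟨b, hb, hline⟩ := exists_supporting_line_of_slope_lt hmono hconv hconc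
      hcs₁ hs₁ hs₁α hα1 ((htmax ⟨hmα.le, hα1.le⟩).trans_lt hts₁)
    refine ⟨α, ⟨hmα.le, hα1.le⟩, b, hb, ?_⟩
    simpa [div_self hα0.ne'] using hline

end ConvexConcave

/-- For `φ : [0,1] → ℝ` continuous, increasing, convex on `[0,c]` and concave on `[c,1]`,
the maximum of `∫ φ dQ` over probability measures `Q` on `[0,1]` with mean at most `α`
is attained by a two-point measure `(1 - α/t) δ₀ + (α/t) δ_t` with `t ∈ [max(α,c), 1]`. -/
theorem argmax_two_point (α c : ℝ) (hα : α ∈ Set.Icc (0:ℝ) 1) (hc : c ∈ Set.Icc (0:ℝ) 1)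
    (φ : ℝ → ℝ) (hcont : ContinuousOn φ (Set.Icc 0 1))
    (hmono : MonotoneOn φ (Set.Icc 0 1))
    (hconv : ConvexOn ℝ (Set.Icc 0 c) φ) (hconc : ConcaveOn ℝ (Set.Icc c 1) φ) :
    ∃ t ∈ Set.Icc (max α c) 1,
      ∀ Q : Measure ℝ, IsProbabilityMeasure Q → Q (Set.Icc 0 1) = 1 →
        (∫ s, s ∂Q) ≤ α →
        ∫ s, φ s ∂Q ≤
          ∫ s, φ s ∂(ENNReal.ofReal (1 - α / t) • Measure.dirac (0:ℝ)
            + ENNReal.ofReal (α / t) • Measure.dirac t) := by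
  have hQ : ∀ Q : Measure ℝ, IsProbabilityMeasure Q → Q (Icc 0 1) = 1 → ∀ᵐ s ∂Q, s ∈ Icc 0 1 :=
    fun Q _ hQ ↦ (ae_mem_iff_measure_eq measurableSet_Icc.nullMeasurableSet).2 (by simp [hQ])
  rcases hα.1.eq_or_lt with rfl | hα0
  · refine ⟨1, ⟨max_le zero_le_one hc.2, le_rfl⟩, fun Q _ hQ₁ hmean ↦ ?_⟩
    rw [integral_eq_of_integral_id_nonpos isCompact_Icc (fun s hs ↦ hs.1) (hQ Q ‹_› hQ₁) hmean]
    exact (integral_twoPoint φ le_rfl zero_le_one).trans (by simp) |>.ge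
  · obtain ⟨t, ht, b, hb, hline⟩ :=
      exists_two_point_supporting_line hcont hmono hconv hconc hc.2 hα0 hα.2
    refine ⟨t, ht, fun Q _ hQ₁ hmean ↦ ?_⟩
    exact (integral_le_of_le_affine isCompact_Icc (hQ Q ‹_› hQ₁) hcont hb hline hmean).trans_eq
      (integral_twoPoint φ hα.1 ((le_max_left α c).trans ht.1)).symm
end
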